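/- arXiv:1110.6706 — 6 statements merged into one kernel-verified Lean document; each statement's English description precedes it below -/
import Mathlib

section
/- Let q ∈ ℝ^{1+n} be null future-directed (q ≠ 0 and q^0 = |q⃗|), and let γ : [0,1] → ℝ^{1+n} be a future-directed causal curve with γ(0) = 0 and γ(1) = q. Then γ is a monotone reparametrization of the null segment from 0 to q: there exists a nondecreasing function t : [0,1] → [0,1] with t(0) = 0, t(1) = 1 and γ(s) = t(s)·q for every s ∈ [0,1]. In particular the image of γ is contained in the null ray { s·q : s ∈ [0,1] }. -/
open Set MeasureTheory Filter Topology
open scoped RealInnerProductSpace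

noncomputable section

/-- Minkowski space-time `ℝ^{1+n} = ℝ × ℝ^n`. -/
abbrev Mink (n : ℕ) : Type := ℝ × EuclideanSpace ℝ (Fin n)

/-- A vector is timelike future-directed if `v⁰ > |v⃗|`. -/
def timelikeFD {n : ℕ} (v : Mink n) : Prop := ‖v.2‖ < v.1

/-- A vector is causal future-directed if `v ≠ 0` and `v⁰ ≥ |v⃗|`. -/
def causalFD {n : ℕ} (v : Mink n) : Prop := v ≠ 0 ∧ ‖v.2‖ ≤ v.1

/-- A vector is null future-directed if `v ≠ 0` and `v⁰ = |v⃗|`. -/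
def nullFD {n : ℕ} (v : Mink n) : Prop := v ≠ 0 ∧ ‖v.2‖ = v.1

/-- A vector is causal past-directed if `-v` is causal future-directed. -/
def causalPD {n : ℕ} (v : Mink n) : Prop := causalFD (-v)

/-- The Minkowski bilinear form `η(x,y) = -x⁰y⁰ + ⟨x⃗,y⃗⟩`. -/
def minkBF {n : ℕ} (x y : Mink n) : ℝ := -(x.1 * y.1) + ⟪x.2, y.2⟫

/-- The Euclidean norm on `ℝ^{1+n}`. -/
def eNorm {n : ℕ} (v : Mink n) : ℝ := Real.sqrt (v.1 ^ 2 + ‖v.2‖ ^ 2)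

/-- A future-directed causal curve defined on `S ⊆ ℝ`: locally Lipschitz, with
almost-everywhere derivative causal future-directed. -/
def IsCausalCurveOn {n : ℕ} (γ : ℝ → Mink n) (S : Set ℝ) : Prop :=
  (∀ a b : ℝ, Icc a b ⊆ S → ∃ K : NNReal, LipschitzOnWith K γ (Icc a b)) ∧
  (∀ᵐ s ∂(volume.restrict S), ∃ v : Mink n, HasDerivWithinAt γ v S s ∧ causalFD v)

/-- A future-directed timelike curve defined on `S ⊆ ℝ`. -/
def IsTimelikeCurveOn {n : ℕ} (γ : ℝ → Mink n) (S : Set ℝ) : Prop :=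
  (∀ a b : ℝ, Icc a b ⊆ S → ∃ K : NNReal, LipschitzOnWith K γ (Icc a b)) ∧
  (∀ᵐ s ∂(volume.restrict S), ∃ v : Mink n, HasDerivWithinAt γ v S s ∧ timelikeFD v)

/-- A past-directed causal curve defined on `S ⊆ ℝ`. -/
def IsPastCausalCurveOn {n : ℕ} (γ : ℝ → Mink n) (S : Set ℝ) : Prop :=
  (∀ a b : ℝ, Icc a b ⊆ S → ∃ K : NNReal, LipschitzOnWith K γ (Icc a b)) ∧
  (∀ᵐ s ∂(volume.restrict S), ∃ v : Mink n, HasDerivWithinAt γ v S s ∧ causalPD v)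

/-- `chron p q`: there is a future-directed timelike curve from `p` to `q`. -/
def chron {n : ℕ} (p q : Mink n) : Prop :=
  ∃ (a b : ℝ) (γ : ℝ → Mink n), a < b ∧ IsTimelikeCurveOn γ (Icc a b) ∧ γ a = p ∧ γ b = q

/-- `caus p q`: `q = p`, or there is a future-directed causal curve from `p` to `q`. -/
def caus {n : ℕ} (p q : Mink n) : Prop :=
  p = q ∨ ∃ (a b : ℝ) (γ : ℝ → Mink n), a < b ∧ IsCausalCurveOn γ (Icc a b) ∧ γ a = p ∧ γ b = q

/-- `causPast p q`: `q = p`, or there is a past-directed causal curve from `p` to `q`. -/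
def causPast {n : ℕ} (p q : Mink n) : Prop :=
  p = q ∨ ∃ (a b : ℝ) (γ : ℝ → Mink n), a < b ∧ IsPastCausalCurveOn γ (Icc a b) ∧ γ a = p ∧ γ b = q

/-- The timelike future `I⁺(U)`. -/
def Iplus {n : ℕ} (U : Set (Mink n)) : Set (Mink n) := {q | ∃ p ∈ U, chron p q}

/-- The causal future `J⁺(U)`. -/
def Jplus {n : ℕ} (U : Set (Mink n)) : Set (Mink n) := {q | ∃ p ∈ U, caus p q}

/-- The causal past `J⁻(U)`. -/
def Jminus {n : ℕ} (U : Set (Mink n)) : Set (Mink n) := {q | ∃ p ∈ U, causPast p q}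

/-- An inextendible future-directed timelike curve: defined on all of `ℝ`, locally
Lipschitz, parameterized by Euclidean arclength, with a.e. timelike future derivative. -/
def IsInextTimelike {n : ℕ} (γ : ℝ → Mink n) : Prop :=
  LocallyLipschitz γ ∧
  ∀ᵐ s : ℝ, ∃ v : Mink n, HasDerivAt γ v s ∧ timelikeFD v ∧ eNorm v = 1

/-!
The functional `p ↦ -η(q, p)` is nonnegative on future causal vectors, so it is nondecreasing
along `γ`; since `q` is null it vanishes at both endpoints, hence identically. So almost every
velocity `γ'` is a causal vector `η`-orthogonal to the null vector `q`, and equality in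
Cauchy–Schwarz forces it to be a multiple of `q`. Thus `γ - (γ⁰ / q⁰) q` is an absolutely
continuous curve with almost everywhere vanishing derivative, hence constant, equal to its
value `0` at `s = 0`.
-/

open ContinuousLinearMap

theorem AbsolutelyContinuousOnInterval.monotoneOn_of_ae_deriv_nonneg {f : ℝ → ℝ} {a b : ℝ}
    (hf : AbsolutelyContinuousOnInterval f a b)
    (hf' : 0 ≤ᵐ[volume.restrict (Icc a b)] deriv f) :
    MonotoneOn f (Icc a b) := by
  intro x hx y hy hxy
  have hsub : Icc x y ⊆ Icc a b := Icc_subset_Icc hx.1 hy.2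
  have hftc := (hf.mono (c := x) (d := y)
    (by rwa [uIcc_of_le hxy, uIcc_of_le (hx.1.trans hx.2)])).integral_deriv_eq_sub
  have hnonneg := intervalIntegral.integral_nonneg_of_ae_restrict hxy
    (ae_restrict_of_ae_restrict_of_subset hsub hf')
  linarith

section Minkowski

variable {n : ℕ}

theorem nullFD.fst_pos {q : Mink n} (hq : nullFD q) : 0 < q.1 := by
  refine hq.2 ▸ (norm_nonneg q.2).lt_of_ne fun h => hq.1 ?_
  exact Prod.ext (hq.2 ▸ h.symm) (norm_eq_zero.1 h.symm)

theorem minkBF_self_of_nullFD {q : Mink n} (hq : nullFD q) : minkBF q q = 0 := by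
  rw [minkBF, real_inner_self_eq_norm_sq, hq.2]
  ring

theorem minkBF_nonpos {q v : Mink n} (hq : ‖q.2‖ ≤ q.1) (hv : ‖v.2‖ ≤ v.1) :
    minkBF q v ≤ 0 := by
  have hcs := real_inner_le_norm q.2 v.2
  have hprod := mul_le_mul hq hv (norm_nonneg _) ((norm_nonneg _).trans hq)
  rw [minkBF]
  linarith

theorem eq_smul_of_minkBF_eq_zero {q v : Mink n} (hq : nullFD q) (hv : ‖v.2‖ ≤ v.1)
    (h : minkBF q v = 0) : v = (v.1 / q.1) • q := by
  have hq0 := hq.fst_pos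
  have hinner : ⟪q.2, v.2⟫ = q.1 * v.1 := by rw [minkBF] at h; linarith
  have hnull : ‖v.2‖ = v.1 := by
    refine le_antisymm hv (le_of_mul_le_mul_left ?_ hq0)
    rw [← hinner, ← hq.2]
    exact real_inner_le_norm q.2 v.2
  have hpar := inner_eq_norm_mul_iff_real.1 (by rw [hinner, hnull, hq.2])
  rw [hnull, hq.2] at hpar
  refine Prod.ext (by rw [Prod.smul_fst, smul_eq_mul, div_mul_cancel₀ _ hq0.ne']) ?_
  rw [Prod.smul_snd, div_eq_inv_mul, mul_smul, hpar, smul_smul, inv_mul_cancel₀ hq0.ne', one_smul]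

def minkBFL (q : Mink n) : Mink n →L[ℝ] ℝ :=
  -(q.1 • fst ℝ ℝ (EuclideanSpace ℝ (Fin n))) + (innerSL ℝ q.2).comp (snd ℝ ℝ _)

@[simp]
theorem minkBFL_apply (q p : Mink n) : minkBFL q p = minkBF q p := by
  simp [minkBFL, minkBF]

end Minkowski

namespace IsCausalCurveOn

variable {n : ℕ} {γ : ℝ → Mink n} {a b : ℝ}

theorem ae_hasDerivAt (hγ : IsCausalCurveOn γ (Icc a b)) :
    ∀ᵐ s ∂volume.restrict (Icc a b), ∃ v, HasDerivAt γ v s ∧ causalFD v := by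
  rw [← Measure.restrict_congr_set Ioo_ae_eq_Icc]
  filter_upwards [ae_restrict_of_ae_restrict_of_subset Ioo_subset_Icc_self hγ.2,
    ae_restrict_mem measurableSet_Ioo] with s ⟨v, hv, hvc⟩ hs
  exact ⟨v, hv.hasDerivAt (Icc_mem_nhds hs.1 hs.2), hvc⟩

theorem absolutelyContinuousOnInterval_comp {F : Type*} [NormedAddCommGroup F]
    [NormedSpace ℝ F] (hγ : IsCausalCurveOn γ (Icc a b)) (hab : a ≤ b) (L : Mink n →L[ℝ] F) :
    AbsolutelyContinuousOnInterval (L ∘ γ) a b := by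
  obtain ⟨K, hK⟩ := hγ.1 a b subset_rfl
  rw [← uIcc_of_le hab] at hK
  exact (L.lipschitz.comp_lipschitzOnWith hK).absolutelyContinuousOnInterval

theorem monotoneOn_comp (hγ : IsCausalCurveOn γ (Icc a b)) (hab : a ≤ b)
    (L : Mink n →L[ℝ] ℝ) (hL : ∀ v, causalFD v → 0 ≤ L v) :
    MonotoneOn (L ∘ γ) (Icc a b) := by
  refine (hγ.absolutelyContinuousOnInterval_comp hab L).monotoneOn_of_ae_deriv_nonneg ?_
  filter_upwards [hγ.ae_hasDerivAt] with s ⟨v, hv, hvc⟩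
  rw [(L.hasFDerivAt.comp_hasDerivAt s hv).deriv]
  exact hL v hvc

variable {q : Mink n}

theorem minkBF_eq_zero_of_nullFD (hγ : IsCausalCurveOn γ (Icc a b)) (hab : a ≤ b)
    (hq : nullFD q) (ha : γ a = 0) (hb : γ b = q) :
    ∀ s ∈ Icc a b, minkBF q (γ s) = 0 := by
  have hmono := hγ.monotoneOn_comp hab (-minkBFL q)
    fun v hv => by simpa using minkBF_nonpos hq.2.le hv.2
  intro s hs
  have hle : -minkBFL q (γ a) ≤ -minkBFL q (γ s) := hmono ⟨le_rfl, hab⟩ hs hs.1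
  have hge : -minkBFL q (γ s) ≤ -minkBFL q (γ b) := hmono hs ⟨hab, le_rfl⟩ hs.2
  rw [ha, map_zero, neg_zero] at hle
  rw [hb, minkBFL_apply q q, minkBF_self_of_nullFD hq] at hge
  rw [← minkBFL_apply]
  linarith

theorem ae_hasDerivAt_eq_smul_of_nullFD (hγ : IsCausalCurveOn γ (Icc a b)) (hab : a < b)
    (hq : nullFD q) (ha : γ a = 0) (hb : γ b = q) :
    ∀ᵐ s ∂volume.restrict (Icc a b), ∃ v, HasDerivAt γ v s ∧ v = (v.1 / q.1) • q := by
  have hη := hγ.minkBF_eq_zero_of_nullFD hab.le hq ha hb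
  filter_upwards [hγ.ae_hasDerivAt, ae_restrict_mem measurableSet_Icc] with s ⟨v, hv, hvc⟩ hs
  refine ⟨v, hv, eq_smul_of_minkBF_eq_zero hq hvc.2 ?_⟩
  have hder := ((minkBFL q).hasFDerivAt.comp_hasDerivAt s hv).hasDerivWithinAt (s := Icc a b)
  have hconst : HasDerivWithinAt (minkBFL q ∘ γ) 0 (Icc a b) s :=
    (hasDerivWithinAt_const s (Icc a b) (0 : ℝ)).congr
      (fun x hx => by simpa using hη x hx) (by simpa using hη s hs)
  simpa using (uniqueDiffOn_Icc hab s hs).eq_deriv _ hder hconst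

theorem eq_smul_of_nullFD (hγ : IsCausalCurveOn γ (Icc a b)) (hab : a < b)
    (hq : nullFD q) (ha : γ a = 0) (hb : γ b = q) :
    ∀ s ∈ Icc a b, γ s = ((γ s).1 / q.1) • q := by
  let P : Mink n →L[ℝ] Mink n := .id ℝ _ - (q.1⁻¹ • fst ℝ ℝ _).smulRight q
  have hP : ∀ p, P p = p - (p.1 / q.1) • q := fun p => by simp [P, div_eq_inv_mul]
  have hPγ : ∀ᵐ s ∂volume.restrict (Icc a b), HasDerivAt (P ∘ γ) 0 s := by
    filter_upwards [hγ.ae_hasDerivAt_eq_smul_of_nullFD hab hq ha hb] with s ⟨v, hv, hvq⟩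
    simpa [hP, ← hvq] using P.hasFDerivAt.comp_hasDerivAt s hv
  obtain ⟨C, hC⟩ := (hγ.absolutelyContinuousOnInterval_comp hab.le P).const_of_ae_hasDerivAt_zero
    (by rw [uIcc_of_le hab.le]; exact (ae_restrict_iff' measurableSet_Icc).1 hPγ)
  rw [uIcc_of_le hab.le] at hC
  have hCzero : C = 0 := by simpa [hP, ha] using (hC a ⟨le_rfl, hab.le⟩).symm
  intro s hs
  simpa [hP, hCzero, sub_eq_zero] using hC s hs

end IsCausalCurveOn

/-- a future-directed causal curve from the origin to a null future-directed
point `q` is a monotone reparametrization of the null segment from `0` to `q`. -/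
theorem causal_curve_to_null_point_is_null_segment (n : ℕ) (q : Mink n) (hq : nullFD q)
    (γ : ℝ → Mink n) (hγ : IsCausalCurveOn γ (Icc 0 1))
    (h0 : γ 0 = 0) (h1 : γ 1 = q) :
    ∃ t : ℝ → ℝ, MonotoneOn t (Icc 0 1) ∧ t 0 = 0 ∧ t 1 = 1 ∧
      ∀ s ∈ Icc (0:ℝ) 1, γ s = t s • q := by
  have hq0 := hq.fst_pos
  have htime : MonotoneOn (fun s => (γ s).1) (Icc 0 1) :=
    hγ.monotoneOn_comp zero_le_one (fst ℝ ℝ _) fun v hv => (norm_nonneg _).trans hv.2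
  refine ⟨fun s => (γ s).1 / q.1, fun x hx y hy hxy => ?_, by simp [h0], by simp [h1, hq0.ne'],
    hγ.eq_smul_of_nullFD zero_lt_one hq h0 h1⟩
  exact div_le_div_of_nonneg_right (htime hx hy hxy) hq0.le
end
end

section
/- Let γ : [0,1] → ℝ^{1+n} be a future-directed causal curve, and suppose that there exist 0 ≤ s₁ < s₂ ≤ 1 such that γ'(s) is timelike future-directed for almost every s ∈ [s₁, s₂] (i.e. γ restricted to [s₁,s₂] is timelike). Then γ(1) ∈ I^+(γ(0)), i.e. there exists a future-directed timelike curve from γ(0) to γ(1). -/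
/-!
Let `g(s) = γ⁰(s) - |γ⃗(s) - γ⃗(0)|`, the height of `γ(s)` above the light cone of `γ(0)`.
It is Lipschitz, hence absolutely continuous, and wherever it is differentiable its derivative is
at least `γ'⁰(s) - |γ⃗'(s)|` (compare right difference quotients, using the reverse triangle
inequality). This is `≥ 0` almost everywhere and `> 0` almost everywhere on `[s₁, s₂]`, so the
fundamental theorem of calculus gives `g(1) > g(0) = γ⁰(0)`: the chord `γ(1) - γ(0)` is timelike,
and the straight segment from `γ(0)` to `γ(1)` is the required timelike curve.
-/

open Set MeasureTheory Filter Topology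
open scoped RealInnerProductSpace

noncomputable section

section ConeHeight

variable {E : Type*} [NormedAddCommGroup E]

/-- On `ℝ × ℝ^n` this is positive exactly on the timelike future of `(0, c)`. -/
def coneHeight (c : E) (p : ℝ × E) : ℝ := p.1 - ‖p.2 - c‖

@[simp]
lemma coneHeight_self (p : ℝ × E) : coneHeight p.2 p = p.1 := by
  simp [coneHeight]

lemma sub_norm_sub_le_coneHeight_sub (c : E) (p q : ℝ × E) :
    (p - q).1 - ‖(p - q).2‖ ≤ coneHeight c p - coneHeight c q := by
  have h := norm_sub_norm_le (p.2 - c) (q.2 - c)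
  rw [sub_sub_sub_cancel_right] at h
  simp only [coneHeight, Prod.fst_sub, Prod.snd_sub]
  linarith

lemma lipschitzWith_coneHeight (c : E) : LipschitzWith 2 (coneHeight c) := by
  refine LipschitzWith.of_dist_le_mul fun p q => ?_
  have h := abs_norm_sub_norm_le (p.2 - c) (q.2 - c)
  rw [sub_sub_sub_cancel_right] at h
  rw [Real.dist_eq, dist_eq_norm, coneHeight, coneHeight, NNReal.coe_ofNat]
  calc |p.1 - ‖p.2 - c‖ - (q.1 - ‖q.2 - c‖)| ≤ |p.1 - q.1| + |‖p.2 - c‖ - ‖q.2 - c‖| := by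
        rw [sub_sub_sub_comm]; exact abs_sub _ _
    _ ≤ ‖p - q‖ + ‖p - q‖ := add_le_add (norm_fst_le (p - q)) (h.trans (norm_snd_le (p - q)))
    _ = 2 * ‖p - q‖ := by ring

variable [NormedSpace ℝ E]

lemma HasDerivWithinAt.sub_norm_le_deriv_coneHeight_comp {f : ℝ → ℝ × E} {v : ℝ × E}
    {s : Set ℝ} {x : ℝ} (hf : HasDerivWithinAt f v s x) (hs : s ∈ 𝓝[>] x) (c : E)
    (hg : DifferentiableAt ℝ (coneHeight c ∘ f) x) :
    v.1 - ‖v.2‖ ≤ deriv (coneHeight c ∘ f) x := by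
  have hf' : Tendsto (slope f x) (𝓝[>] x) (𝓝 v) :=
    (hasDerivWithinAt_iff_tendsto_slope' self_notMem_Ioi).1 (hf.mono_of_mem_nhdsWithin hs)
  have hg' : Tendsto (slope (coneHeight c ∘ f) x) (𝓝[>] x) (𝓝 (deriv (coneHeight c ∘ f) x)) :=
    (hasDerivWithinAt_iff_tendsto_slope' self_notMem_Ioi).1 hg.hasDerivAt.hasDerivWithinAt
  refine le_of_tendsto_of_tendsto (((continuous_fst.sub continuous_snd.norm).tendsto v).comp hf')
    hg' ?_
  filter_upwards [self_mem_nhdsWithin] with u (hu : x < u)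
  have hpos : 0 < (u - x)⁻¹ := inv_pos.2 (sub_pos.2 hu)
  simp only [Function.comp_apply, Pi.sub_apply, slope_def_module, Prod.smul_fst,
    Prod.smul_snd, smul_eq_mul, norm_smul, Real.norm_of_nonneg hpos.le, ← mul_sub]
  exact mul_le_mul_of_nonneg_left (sub_norm_sub_le_coneHeight_sub c _ _) hpos.le

lemma ae_sub_norm_le_deriv_coneHeight_comp {f : ℝ → ℝ × E} {a b : ℝ} (c : E)
    (hf : AbsolutelyContinuousOnInterval (coneHeight c ∘ f) a b) :
    ∀ᵐ x ∂volume.restrict (Icc a b),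
      ∀ v, HasDerivWithinAt f v (Icc a b) x → v.1 - ‖v.2‖ ≤ deriv (coneHeight c ∘ f) x := by
  filter_upwards [ae_restrict_of_ae hf.ae_differentiableAt, ae_restrict_of_ae (volume.ae_ne b),
    ae_restrict_mem measurableSet_Icc] with x hdiff hxb hx v hv
  have hIcc : Icc a b ∈ 𝓝[>] x := mem_of_superset (Ioo_mem_nhdsGT (lt_of_le_of_ne hx.2 hxb))
    (Ioo_subset_Icc_self.trans (Icc_subset_Icc_left hx.1))
  exact hv.sub_norm_le_deriv_coneHeight_comp hIcc c (hdiff (Icc_subset_uIcc hx))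

end ConeHeight

namespace AbsolutelyContinuousOnInterval

variable {f : ℝ → ℝ} {a b : ℝ}

lemma le_of_ae_deriv_nonneg (hf : AbsolutelyContinuousOnInterval f a b) (hab : a ≤ b)
    (hd : ∀ᵐ x ∂volume.restrict (Icc a b), 0 ≤ deriv f x) : f a ≤ f b := by
  rw [← sub_nonneg, ← hf.integral_deriv_eq_sub]
  exact intervalIntegral.integral_nonneg_of_ae_restrict hab hd

lemma lt_of_ae_deriv_pos (hf : AbsolutelyContinuousOnInterval f a b) (hab : a < b)
    (hd : ∀ᵐ x ∂volume.restrict (Icc a b), 0 < deriv f x) : f a < f b := by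
  have hd' : ∀ᵐ x ∂volume.restrict (Ioc a b), 0 < deriv f x :=
    ae_restrict_of_ae_restrict_of_subset Ioc_subset_Icc_self hd
  rw [← sub_pos, ← hf.integral_deriv_eq_sub,
    intervalIntegral.integral_pos_iff_support_of_nonneg_ae'
      (by rw [uIoc_of_le hab.le]; exact hd'.mono fun _ h => h.le) hf.intervalIntegrable_deriv]
  have hsupp : Function.support (deriv f) =ᵐ[volume.restrict (Ioc a b)] univ :=
    ae_eq_univ.2 (ae_iff.1 (hd'.mono fun _ h => h.ne'))
  rw [← Measure.restrict_apply' measurableSet_Ioc, measure_congr hsupp,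
    Measure.restrict_apply MeasurableSet.univ, univ_inter, Real.volume_Ioc]
  exact ⟨hab, ENNReal.ofReal_pos.2 (sub_pos.2 hab)⟩

end AbsolutelyContinuousOnInterval

lemma timelikeFD_sub_iff_lt_coneHeight {n : ℕ} {p q : Mink n} :
    timelikeFD (q - p) ↔ p.1 < coneHeight p.2 q := by
  simp only [timelikeFD, coneHeight, Prod.fst_sub, Prod.snd_sub]
  constructor <;> intro h <;> linarith

lemma chron_of_timelikeFD_sub {n : ℕ} {p q : Mink n} (h : timelikeFD (q - p)) : chron p q := by
  refine ⟨0, 1, fun t : ℝ => p + t • (q - p), one_pos, ⟨fun _ _ _ => ⟨‖q - p‖₊, ?_⟩, ?_⟩,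
    by simp, by simp⟩
  · exact (LipschitzWith.of_dist_le_mul fun x y => by
      rw [dist_eq_norm, Real.dist_eq, add_sub_add_left_eq_sub, ← sub_smul, norm_smul,
        Real.norm_eq_abs, coe_nnnorm, mul_comm]).lipschitzOnWith
  · refine Eventually.of_forall fun t => ⟨q - p, ?_, h⟩
    simpa using ((hasDerivAt_id t).smul_const (q - p)).const_add p |>.hasDerivWithinAt

/-- a future-directed causal curve which is timelike on some parameter
subinterval can be replaced by a timelike curve between its endpoints:
`γ(1) ∈ I⁺(γ(0))`. -/
theorem causal_curve_with_timelike_piece_pushup (n : ℕ) (γ : ℝ → Mink n) (s₁ s₂ : ℝ)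
    (h1 : 0 ≤ s₁) (h12 : s₁ < s₂) (h2 : s₂ ≤ 1)
    (hγ : IsCausalCurveOn γ (Icc 0 1))
    (ht : ∀ᵐ s ∂(volume.restrict (Icc s₁ s₂)),
      ∃ v : Mink n, HasDerivWithinAt γ v (Icc 0 1) s ∧ timelikeFD v) :
    γ 1 ∈ Iplus ({γ 0} : Set (Mink n)) := by
  obtain ⟨hlip, hcausal⟩ := hγ
  obtain ⟨K, hK⟩ := hlip 0 1 subset_rfl
  set g := coneHeight (γ 0).2 ∘ γ
  have hg : AbsolutelyContinuousOnInterval g 0 1 :=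
    ((lipschitzWith_coneHeight _).comp_lipschitzOnWith
      (by rwa [uIcc_of_le zero_le_one])).absolutelyContinuousOnInterval
  have hderiv := ae_sub_norm_le_deriv_coneHeight_comp (γ 0).2 hg
  have hmono : ∀ a b, 0 ≤ a → a ≤ b → b ≤ 1 → g a ≤ g b := fun a b ha hab hb =>
    (hg.mono (by simp [uIcc_of_le, hab, ha, hb, Icc_subset_Icc])).le_of_ae_deriv_nonneg hab <| by
      filter_upwards [ae_restrict_of_ae_restrict_of_subset (Icc_subset_Icc ha hb) hderiv,
        ae_restrict_of_ae_restrict_of_subset (Icc_subset_Icc ha hb) hcausal] with x hx ⟨v, hv, hvc⟩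
      exact (sub_nonneg.2 hvc.2).trans (hx v hv)
  have hpush : g s₁ < g s₂ :=
    (hg.mono (by simp [uIcc_of_le, h12.le, h1, h2, Icc_subset_Icc])).lt_of_ae_deriv_pos h12 <| by
      filter_upwards [ae_restrict_of_ae_restrict_of_subset (Icc_subset_Icc h1 h2) hderiv, ht]
        with x hx ⟨v, hv, hvt⟩
      exact (sub_pos.2 hvt).trans_le (hx v hv)
  have hg01 : (γ 0).1 < coneHeight (γ 0).2 (γ 1) := calc
    (γ 0).1 = g 0 := (coneHeight_self _).symm
    _ ≤ g s₁ := hmono 0 s₁ le_rfl h1 (h12.le.trans h2)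
    _ < g s₂ := hpush
    _ ≤ g 1 := hmono s₂ 1 (h1.trans h12.le) h2 le_rfl
  exact ⟨γ 0, rfl, chron_of_timelikeFD_sub (timelikeFD_sub_iff_lt_coneHeight.2 hg01)⟩
end
end

section
/- (Global hyperbolicity of Minkowski space-time: compactness of causal diamonds.) For all p, q ∈ ℝ^{1+n}, the set J^+(p) ∩ J^-(q) is a compact subset of ℝ^{1+n}. -/
open Set MeasureTheory Filter Topology
open scoped RealInnerProductSpace

noncomputable section

/-!
A causal curve from `p` to `x` forces `‖x⃗ - p⃗‖ ≤ x⁰ - p⁰`: for every continuous linear functional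
`f` on `ℝⁿ`, `‖f‖ x⁰ - f x⃗` is nonnegative on the causal cone, so it is nondecreasing along the
curve, a Lipschitz (hence absolutely continuous) function being the integral of its a.e.
derivative. Conversely the straight segment joins any two such points, so `J⁺(p)` and `J⁻(q)`
are closed solid cones and their intersection is a closed subset of
`[p⁰, q⁰] × closedBall p⃗ (q⁰ - p⁰)`.
-/

theorem LipschitzOnWith.le_of_ae_hasDerivWithinAt_nonneg {f : ℝ → ℝ} {a b : ℝ} {K : NNReal}
    (hab : a ≤ b) (hf : LipschitzOnWith K f (Icc a b))
    (hder : ∀ᵐ s ∂volume.restrict (Icc a b), ∃ v, HasDerivWithinAt f v (Icc a b) s ∧ 0 ≤ v) :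
    f a ≤ f b := by
  have hac : AbsolutelyContinuousOnInterval f a b :=
    (uIcc_of_le hab ▸ hf).absolutelyContinuousOnInterval
  have hIoo : ∀ᵐ s ∂volume.restrict (Icc a b), s ∈ Ioo a b := by
    rw [← Measure.restrict_congr_set Ioo_ae_eq_Icc]
    exact ae_restrict_mem measurableSet_Ioo
  have hderiv : 0 ≤ᵐ[volume.restrict (Icc a b)] deriv f := by
    filter_upwards [hder, hIoo] with s ⟨v, hv, hv0⟩ hs
    rwa [(hv.hasDerivAt (Icc_mem_nhds hs.1 hs.2)).deriv]
  have := intervalIntegral.integral_nonneg_of_ae_restrict hab hderiv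
  rw [hac.integral_deriv_eq_sub] at this
  linarith

theorem LipschitzOnWith.map_le_of_ae_hasDerivWithinAt_map_nonneg {F : Type*}
    [NormedAddCommGroup F] [NormedSpace ℝ F] {γ : ℝ → F} {a b : ℝ} {K : NNReal}
    (L : F →L[ℝ] ℝ) (hab : a ≤ b) (hγ : LipschitzOnWith K γ (Icc a b))
    (hder : ∀ᵐ s ∂volume.restrict (Icc a b), ∃ v, HasDerivWithinAt γ v (Icc a b) s ∧ 0 ≤ L v) :
    L (γ a) ≤ L (γ b) :=
  (L.lipschitz.comp_lipschitzOnWith hγ).le_of_ae_hasDerivWithinAt_nonneg hab <|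
    hder.mono fun s ⟨v, hv, hv0⟩ => ⟨L v, L.hasFDerivAt.comp_hasDerivWithinAt s hv, hv0⟩

theorem LipschitzOnWith.norm_sub_snd_le_sub_fst {E : Type*} [NormedAddCommGroup E]
    [NormedSpace ℝ E] {γ : ℝ → ℝ × E} {a b : ℝ} {K : NNReal} (hab : a ≤ b)
    (hγ : LipschitzOnWith K γ (Icc a b))
    (hder : ∀ᵐ s ∂volume.restrict (Icc a b),
      ∃ v, HasDerivWithinAt γ v (Icc a b) s ∧ ‖v.2‖ ≤ v.1) :
    ‖(γ b).2 - (γ a).2‖ ≤ (γ b).1 - (γ a).1 := by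
  have key (L : ℝ × E →L[ℝ] ℝ) (hL : ∀ v : ℝ × E, ‖v.2‖ ≤ v.1 → 0 ≤ L v) :
      L (γ a) ≤ L (γ b) :=
    hγ.map_le_of_ae_hasDerivWithinAt_map_nonneg L hab <|
      hder.mono fun s ⟨v, hv, hcone⟩ => ⟨v, hv, hL v hcone⟩
  have hfst : (γ a).1 ≤ (γ b).1 :=
    key (ContinuousLinearMap.fst ℝ ℝ E) fun v hv => (norm_nonneg _).trans hv
  have hdual (f : StrongDual ℝ E) : f ((γ b).2 - (γ a).2) ≤ ((γ b).1 - (γ a).1) * ‖f‖ := by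
    set L := ‖f‖ • ContinuousLinearMap.fst ℝ ℝ E - f.comp (ContinuousLinearMap.snd ℝ ℝ E)
    have hL (v : ℝ × E) : L v = ‖f‖ * v.1 - f v.2 := rfl
    have hmono := key L fun v hv => by
      rw [hL, sub_nonneg]
      exact (le_abs_self _).trans ((f.le_opNorm v.2).trans (by gcongr))
    rw [hL, hL] at hmono
    rw [map_sub]
    linarith
  refine NormedSpace.norm_le_dual_bound ℝ _ (sub_nonneg.2 hfst) fun f => ?_
  rw [Real.norm_eq_abs, abs_le]
  exact ⟨by simpa [add_comm] using hdual (-f), hdual f⟩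

section Minkowski

variable {n : ℕ}

theorem IsCausalCurveOn.norm_sub_le {γ : ℝ → Mink n} {a b : ℝ} (hab : a ≤ b)
    (hγ : IsCausalCurveOn γ (Icc a b)) : ‖(γ b).2 - (γ a).2‖ ≤ (γ b).1 - (γ a).1 := by
  obtain ⟨K, hK⟩ := hγ.1 a b Subset.rfl
  exact hK.norm_sub_snd_le_sub_fst hab <| hγ.2.mono fun s ⟨v, hv, hcausal⟩ => ⟨v, hv, hcausal.2⟩

theorem IsPastCausalCurveOn.norm_sub_le {γ : ℝ → Mink n} {a b : ℝ} (hab : a ≤ b)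
    (hγ : IsPastCausalCurveOn γ (Icc a b)) : ‖(γ a).2 - (γ b).2‖ ≤ (γ a).1 - (γ b).1 := by
  obtain ⟨K, hK⟩ := hγ.1 a b Subset.rfl
  have := hK.neg.norm_sub_snd_le_sub_fst hab <|
    hγ.2.mono fun s ⟨v, hv, hcausal⟩ => ⟨-v, hv.neg, hcausal.2⟩
  simpa [neg_add_eq_sub] using this

theorem isCausalCurveOn_lineMap {p x : Mink n} (h : causalFD (x - p)) (S : Set ℝ) :
    IsCausalCurveOn (AffineMap.lineMap p x) S :=
  ⟨fun _ _ _ => ⟨_, (lipschitzWith_lineMap p x).lipschitzOnWith⟩,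
    ae_of_all _ fun _ => ⟨x - p, AffineMap.hasDerivAt_lineMap.hasDerivWithinAt, h⟩⟩

theorem isPastCausalCurveOn_lineMap {p x : Mink n} (h : causalPD (x - p)) (S : Set ℝ) :
    IsPastCausalCurveOn (AffineMap.lineMap p x) S :=
  ⟨fun _ _ _ => ⟨_, (lipschitzWith_lineMap p x).lipschitzOnWith⟩,
    ae_of_all _ fun _ => ⟨x - p, AffineMap.hasDerivAt_lineMap.hasDerivWithinAt, h⟩⟩

theorem caus_iff {p x : Mink n} : caus p x ↔ ‖x.2 - p.2‖ ≤ x.1 - p.1 := by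
  refine ⟨?_, fun h => ?_⟩
  · rintro (rfl | ⟨a, b, γ, hab, hγ, rfl, rfl⟩)
    · simp
    · exact hγ.norm_sub_le hab.le
  · rcases eq_or_ne p x with rfl | hne
    · exact Or.inl rfl
    · exact Or.inr ⟨0, 1, AffineMap.lineMap p x, one_pos,
        isCausalCurveOn_lineMap ⟨sub_ne_zero.2 hne.symm, h⟩ _, by simp, by simp⟩

theorem causPast_iff {q x : Mink n} : causPast q x ↔ ‖q.2 - x.2‖ ≤ q.1 - x.1 := by
  refine ⟨?_, fun h => ?_⟩
  · rintro (rfl | ⟨a, b, γ, hab, hγ, rfl, rfl⟩)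
    · simp
    · exact hγ.norm_sub_le hab.le
  · rcases eq_or_ne q x with rfl | hne
    · exact Or.inl rfl
    · refine Or.inr ⟨0, 1, AffineMap.lineMap q x, one_pos,
        isPastCausalCurveOn_lineMap ⟨?_, ?_⟩ _, by simp, by simp⟩
      · simpa [sub_eq_zero] using hne
      · simpa using h

theorem Jplus_singleton (p : Mink n) : Jplus {p} = {x | ‖x.2 - p.2‖ ≤ x.1 - p.1} := by
  ext x
  simp [Jplus, caus_iff]

theorem Jminus_singleton (q : Mink n) : Jminus {q} = {x | ‖q.2 - x.2‖ ≤ q.1 - x.1} := by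
  ext x
  simp [Jminus, causPast_iff]

end Minkowski

theorem isCompact_setOf_norm_sub_le_inter {E : Type*} [NormedAddCommGroup E] [ProperSpace E]
    (p q : ℝ × E) :
    IsCompact ({x : ℝ × E | ‖x.2 - p.2‖ ≤ x.1 - p.1} ∩ {x | ‖q.2 - x.2‖ ≤ q.1 - x.1}) := by
  refine ((isCompact_Icc (a := p.1) (b := q.1)).prod
    (isCompact_closedBall p.2 (q.1 - p.1))).of_isClosed_subset ((isClosed_le (by fun_prop) (by fun_prop)).inter
      (isClosed_le (by fun_prop) (by fun_prop))) ?_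
  rintro x ⟨hp : ‖x.2 - p.2‖ ≤ x.1 - p.1, hq : ‖q.2 - x.2‖ ≤ q.1 - x.1⟩
  have := norm_nonneg (x.2 - p.2)
  have := norm_nonneg (q.2 - x.2)
  exact ⟨⟨by linarith, by linarith⟩, by rw [Metric.mem_closedBall, dist_eq_norm]; linarith⟩

/-- global hyperbolicity of Minkowski space-time: all causal diamonds
`J⁺(p) ∩ J⁻(q)` are compact. -/
theorem minkowski_causal_diamond_compact (n : ℕ) (p q : Mink n) :
    IsCompact (Jplus ({p} : Set (Mink n)) ∩ Jminus ({q} : Set (Mink n))) := by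
  rw [Jplus_singleton, Jminus_singleton]
  exact isCompact_setOf_norm_sub_le_inter p q
end
end

section
/- (The hyperplane {x^0 = 0} is a Cauchy surface of Minkowski space-time.) Let γ : ℝ → ℝ^{1+n} be an inextendible future-directed timelike curve, i.e. a locally Lipschitz curve whose derivative γ'(s) is timelike future-directed and satisfies ‖γ'(s)‖ = 1 (Euclidean norm) for almost every s ∈ ℝ. Then there is exactly one s ∈ ℝ with γ^0(s) = 0; moreover γ^0 is strictly increasing with γ^0(s) → ±∞ as s → ±∞. -/
open Set MeasureTheory Filter Topology
open scoped RealInnerProductSpace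

noncomputable section

/-!
A unit timelike future-directed vector has `(v⁰)² > |v⃗|²` and `(v⁰)² + |v⃗|² = 1`, so
`v⁰ > 1/√2 > 1/2`. Hence the time coordinate `t = γ⁰` of an inextendible timelike curve is a
locally Lipschitz function with `t' ≥ 1/2` almost everywhere; by the fundamental theorem of
calculus for absolutely continuous functions, `t b - t a ≥ (b - a) / 2` for `a ≤ b`. So `t` is
strictly increasing and unbounded in both directions, and by the intermediate value theorem
it takes the value `0` exactly once.
-/

theorem LocallyLipschitz.mul_sub_le_sub_of_ae_le_deriv {f : ℝ → ℝ} (hf : LocallyLipschitz f)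
    {c : ℝ} (hderiv : ∀ᵐ x, c ≤ deriv f x) {a b : ℝ} (hab : a ≤ b) :
    c * (b - a) ≤ f b - f a := by
  obtain ⟨K, hK⟩ := hf.locallyLipschitzOn.exists_lipschitzOnWith_of_compact isCompact_uIcc
  have hac : AbsolutelyContinuousOnInterval f a b := hK.absolutelyContinuousOnInterval
  calc c * (b - a) = ∫ _ in a..b, c := by simp [mul_comm]
    _ ≤ ∫ x in a..b, deriv f x :=
        intervalIntegral.integral_mono_ae_restrict hab intervalIntegrable_const
          hac.intervalIntegrable_deriv (ae_restrict_of_ae hderiv)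
    _ = f b - f a := hac.integral_deriv_eq_sub

section LinearGrowth

variable {f : ℝ → ℝ} {c : ℝ} (hc : 0 < c) (hf : ∀ a b, a ≤ b → c * (b - a) ≤ f b - f a)
include hc hf

theorem strictMono_of_mul_sub_le_sub : StrictMono f := fun a b hab => by
  nlinarith [hf a b hab.le, mul_pos hc (sub_pos.2 hab)]

theorem tendsto_atTop_of_mul_sub_le_sub : Tendsto f atTop atTop := by
  refine tendsto_atTop_mono' atTop ?_
    (tendsto_atTop_add_const_left _ (f 0) (tendsto_id.const_mul_atTop hc))
  filter_upwards [eventually_ge_atTop 0] with s hs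
  simp only [id]
  linarith [hf 0 s hs]

theorem tendsto_atBot_of_mul_sub_le_sub : Tendsto f atBot atBot := by
  refine tendsto_atBot_mono' atBot ?_
    (tendsto_atBot_add_const_left _ (f 0) ((tendsto_const_mul_atBot_of_pos hc).2 tendsto_id))
  filter_upwards [eventually_le_atBot 0] with s hs
  simp only [id]
  linarith [hf s 0 hs]

end LinearGrowth

theorem half_lt_fst_of_timelikeFD {n : ℕ} {v : Mink n} (hv : timelikeFD v) (hv1 : eNorm v = 1) :
    1 / 2 < v.1 := by
  have hsq : v.1 ^ 2 + ‖v.2‖ ^ 2 = 1 := by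
    rw [eNorm, Real.sqrt_eq_one] at hv1
    exact hv1
  have hv' : ‖v.2‖ < v.1 := hv
  nlinarith [norm_nonneg v.2]

namespace IsInextTimelike

variable {n : ℕ} {γ : ℝ → Mink n} (hγ : IsInextTimelike γ)
include hγ

theorem locallyLipschitz_fst : LocallyLipschitz fun s => (γ s).1 :=
  LipschitzWith.prod_fst.locallyLipschitz.comp hγ.1

theorem ae_half_le_deriv_fst : ∀ᵐ s, 1 / 2 ≤ deriv (fun s => (γ s).1) s := by
  filter_upwards [hγ.2] with s ⟨v, hv, htime, hunit⟩
  have hfst : HasDerivAt (fun s => (γ s).1) v.1 s := by simpa using hv.hasFDerivAt.fst.hasDerivAt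
  rw [hfst.deriv]
  exact (half_lt_fst_of_timelikeFD htime hunit).le

theorem half_mul_sub_le_sub_fst (a b : ℝ) (hab : a ≤ b) :
    1 / 2 * (b - a) ≤ (γ b).1 - (γ a).1 :=
  hγ.locallyLipschitz_fst.mul_sub_le_sub_of_ae_le_deriv hγ.ae_half_le_deriv_fst hab

end IsInextTimelike

/-- `{x⁰ = 0}` is a Cauchy surface of Minkowski space-time: every
inextendible future-directed timelike curve meets it exactly once; moreover `γ⁰` is
strictly increasing and tends to `±∞` at `±∞`. -/
theorem zero_time_hyperplane_is_cauchy (n : ℕ) (γ : ℝ → Mink n)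
    (hγ : IsInextTimelike γ) :
    (∃! s : ℝ, (γ s).1 = 0) ∧
    StrictMono (fun s => (γ s).1) ∧
    Tendsto (fun s => (γ s).1) atTop atTop ∧
    Tendsto (fun s => (γ s).1) atBot atBot := by
  have hgrowth := hγ.half_mul_sub_le_sub_fst
  have hmono := strictMono_of_mul_sub_le_sub one_half_pos hgrowth
  have htop := tendsto_atTop_of_mul_sub_le_sub one_half_pos hgrowth
  have hbot := tendsto_atBot_of_mul_sub_le_sub one_half_pos hgrowth
  obtain ⟨s, hs⟩ := hγ.locallyLipschitz_fst.continuous.surjective htop hbot 0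
  exact ⟨⟨s, hs, fun r hr => hmono.injective (hr.trans hs.symm)⟩, hmono, htop, hbot⟩
end
end

section
/- (Gradient flows of functions with η-gradient of constant length are affinely parameterized geodesics; flat version.) Let f : ℝ^{1+n} → ℝ be twice continuously differentiable, and let G : ℝ^{1+n} → ℝ^{1+n} be its gradient with respect to the Minkowski form η, i.e. G(x)^0 = −∂_0 f(x) and G(x)^i = ∂_i f(x) for i = 1,…,n. Assume that the function x ↦ η(G(x), G(x)) = −(∂_0 f(x))² + Σ_{i=1}^n (∂_i f(x))² is constant on ℝ^{1+n}. Then every C¹ solution x : I → ℝ^{1+n} of the ODE x'(s) = G(x(s)) satisfies x''(s) = 0 for all s ∈ I; i.e. x(s) = x(s₀) + (s − s₀)·G(x(s₀)) is an affinely parameterized straight line. -/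
open Set MeasureTheory Filter Topology
open scoped RealInnerProductSpace

noncomputable section

lemma minkBF_symm {n : ℕ} (x y : Mink n) : minkBF x y = minkBF y x := by
  simp [minkBF, real_inner_comm, mul_comm]


/-!
Write `B(G x) = df_x` for the Minkowski form `B`. Differentiating this identity shows that
`B(DG_x v, w) = D²f_x(v, w)`, and differentiating `B(G, G) = c` gives `B(DG_x v, G x) = 0`.
By the symmetry of `D²f_x`, `B(DG_x (G x), v) = D²f_x(v, G x) = B(DG_x v, G x) = 0` for all `v`,
so `DG_x (G x) = 0` by nondegeneracy. Along an integral curve this says `(G ∘ x)' = 0`, hence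
`x' = G ∘ x` is constant and `x` is affine.
-/

open Function ContinuousLinearMap

section Calculus

variable {E F : Type*} [NormedAddCommGroup E] [NormedSpace ℝ E]
  [NormedAddCommGroup F] [NormedSpace ℝ F]

theorem Convex.eq_of_forall_hasDerivWithinAt_zero {s : Set ℝ} {g : ℝ → F} (hs : Convex ℝ s)
    (hg : ∀ t ∈ s, HasDerivWithinAt g 0 s t) {a b : ℝ} (ha : a ∈ s) (hb : b ∈ s) :
    g a = g b := by
  have h := norm_image_sub_le_of_norm_hasDerivWithin_le (f' := fun _ => 0) hg
    (fun _ _ => norm_zero.le) hs ha hb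
  rw [zero_mul, norm_le_zero_iff, sub_eq_zero] at h
  exact h.symm

theorem ContDiff.of_injective_comp {X : Type*} [NormedAddCommGroup X] [NormedSpace ℝ X]
    [FiniteDimensional ℝ F] {L : E →L[ℝ] F} (hL : Injective L) {G : X → E} {k : WithTop ℕ∞}
    (h : ContDiff ℝ k (fun x => L (G x))) : ContDiff ℝ k G := by
  obtain ⟨M, hM⟩ := (L : E →ₗ[ℝ] F).exists_leftInverse_of_injective (LinearMap.ker_eq_bot.mpr hL)
  have hG : G = fun x => LinearMap.toContinuousLinearMap M (L (G x)) := by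
    funext x
    exact (LinearMap.congr_fun hM (G x)).symm
  rw [hG]
  exact (LinearMap.toContinuousLinearMap M).contDiff.comp h

theorem eq_add_smul_of_hasDerivWithinAt_of_fderiv_apply_self_eq_zero {V : E → E}
    (hV : Differentiable ℝ V) (hVV : ∀ y, fderiv ℝ V y (V y) = 0) {I : Set ℝ} (hI : Convex ℝ I)
    {x : ℝ → E} (hx : ∀ s ∈ I, HasDerivWithinAt x (V (x s)) I s) {s₀ s : ℝ} (hs₀ : s₀ ∈ I)
    (hs : s ∈ I) : x s = x s₀ + (s - s₀) • V (x s₀) := by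
  have hVx : ∀ t ∈ I, V (x t) = V (x s₀) := by
    refine fun t ht => hI.eq_of_forall_hasDerivWithinAt_zero (g := V ∘ x)
      (fun u hu => ?_) ht hs₀
    simpa [hVV] using (hV (x u)).hasFDerivAt.comp_hasDerivWithinAt u (hx u hu)
  have hline : ∀ t ∈ I, HasDerivWithinAt (fun u => x u - u • V (x s₀)) 0 I t := by
    intro t ht
    simpa [hVx t ht] using (hx t ht).fun_sub ((hasDerivWithinAt_id t I).smul_const (V (x s₀)))
  have h := hI.eq_of_forall_hasDerivWithinAt_zero hline hs hs₀
  rw [sub_eq_iff_eq_add] at h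
  rw [h, sub_smul]
  abel

end Calculus

section Gradient

variable {E : Type*} [NormedAddCommGroup E] [NormedSpace ℝ E]

theorem fderiv_gradient_apply_gradient_eq_zero {B : E →L[ℝ] E →L[ℝ] ℝ}
    (hB_comm : ∀ v w, B v w = B w v) (hB_inj : Injective B) {f : E → ℝ} (hf : ContDiff ℝ 2 f)
    {G : E → E} (hG : ∀ x, B (G x) = fderiv ℝ f x) {a : E} (hGa : DifferentiableAt ℝ G a)
    {c : ℝ} (hc : ∀ x, B (G x) (G x) = c) : fderiv ℝ G a (G a) = 0 := by
  set DG := fderiv ℝ G a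
  set H := fderiv ℝ (fderiv ℝ f) a
  have hDG : HasFDerivAt G DG a := hGa.hasFDerivAt
  have hH : HasFDerivAt (fderiv ℝ f) H a :=
    ((hf.fderiv_right le_rfl).differentiable one_ne_zero a).hasFDerivAt
  have hBDG : B.comp DG = H := by
    have h := B.hasFDerivAt.comp a hDG
    simp only [Function.comp_def, hG] at h
    exact h.unique hH
  have hortho : ∀ v, B (DG v) (G a) = 0 := by
    intro v
    have h := B.hasFDerivAt_of_bilinear hDG hDG
    simp only [hc] at h
    have h' := congr($(h.unique (hasFDerivAt_const c a)) v)
    simp only [add_apply, precompR_apply, precompL_apply, compL_apply, coe_comp,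
      Function.comp_apply, zero_apply, hB_comm (G a)] at h'
    linarith
  have hsymm : IsSymmSndFDerivAt ℝ f a := hf.contDiffAt.isSymmSndFDerivAt (by simp)
  refine hB_inj (ext fun v => ?_)
  calc B (DG (G a)) v = H (G a) v := by rw [← hBDG]; rfl
    _ = H v (G a) := hsymm _ _
    _ = B (DG v) (G a) := by rw [← hBDG]; rfl
    _ = B 0 v := by rw [hortho, map_zero, zero_apply]

end Gradient

def minkForm (n : ℕ) : Mink n →L[ℝ] Mink n →L[ℝ] ℝ :=
  (innerSL ℝ).bilinearComp (snd ℝ ℝ _) (snd ℝ ℝ _) -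
    (mul ℝ ℝ).bilinearComp (fst ℝ ℝ _) (fst ℝ ℝ _)

theorem minkForm_apply {n : ℕ} (v w : Mink n) : minkForm n v w = minkBF v w := by
  simp [minkForm, minkBF, bilinearComp_apply]
  ring

theorem minkForm_comm {n : ℕ} (v w : Mink n) : minkForm n v w = minkForm n w v := by
  simp only [minkForm_apply, minkBF, real_inner_comm, mul_comm]

theorem minkForm_injective (n : ℕ) : Injective (minkForm n) := by
  refine (injective_iff_map_eq_zero _).mpr fun v hv => ?_
  have h := congr($hv (-v.1, v.2))
  simp only [minkForm_apply, minkBF, zero_apply, real_inner_self_eq_norm_sq] at h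
  have h1 : v.1 = 0 := by nlinarith [sq_nonneg ‖v.2‖]
  have h2 : ‖v.2‖ = 0 := by nlinarith [sq_nonneg v.1]
  exact Prod.ext h1 (norm_eq_zero.mp h2)

/-- if the η-gradient `G` of a C² function `f` has constant η-length, then
the integral curves of `G` are affinely parameterized straight lines. -/
theorem gradient_flow_constant_length_is_geodesic (n : ℕ) (f : Mink n → ℝ)
    (G : Mink n → Mink n) (hf : ContDiff ℝ 2 f)
    (hG : ∀ (x w : Mink n), minkBF (G x) w = fderiv ℝ f x w)
    (hconst : ∃ c : ℝ, ∀ x : Mink n, minkBF (G x) (G x) = c)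
    (I : Set ℝ) (hI : I.OrdConnected)
    (x : ℝ → Mink n)
    (hx : ∀ s ∈ I, HasDerivWithinAt x (G (x s)) I s) :
    ∀ s₀ ∈ I, ∀ s ∈ I, x s = x s₀ + (s - s₀) • G (x s₀) := by
  intro s₀ hs₀ s hs
  obtain ⟨c, hc⟩ := hconst
  have hG' : ∀ y, minkForm n (G y) = fderiv ℝ f y := fun y => ext fun w => by
    rw [minkForm_apply, hG]
  have hG_diff : Differentiable ℝ G :=
    (ContDiff.of_injective_comp (minkForm_injective n) (k := 1)
      (by simpa only [hG'] using hf.fderiv_right le_rfl)).differentiable one_ne_zero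
  have hflow : ∀ y, fderiv ℝ G y (G y) = 0 := fun y =>
    fderiv_gradient_apply_gradient_eq_zero minkForm_comm (minkForm_injective n) hf hG'
      (hG_diff y) fun y => (minkForm_apply _ _).trans (hc y)
  exact eq_add_smul_of_hasDerivWithinAt_of_fderiv_apply_self_eq_zero hG_diff hflow hI.convex hx
    hs₀ hs
end
end

section
/- (Geodesic convexity of small balls: analytic core.) Let m ≥ 1, x₀ ∈ ℝ^m, r₀ > 0 and C ≥ 0 with C·r₀ ≤ 1. Let x : [a,b] → ℝ^m be twice continuously differentiable with ‖x(s) − x₀‖ ≤ r₀ and ‖x''(s)‖ ≤ C‖x'(s)‖² for every s ∈ [a,b]. Then the function f(s) = ‖x(s) − x₀‖² is convex on [a,b]. Consequently, if ‖x(a) − x₀‖ < r and ‖x(b) − x₀‖ < r for some r ≤ r₀, then ‖x(s) − x₀‖ < r for every s ∈ [a,b]. -/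
open Set MeasureTheory Filter Topology
open scoped RealInnerProductSpace

noncomputable section

/-
Writing `y = x - x₀`, the second derivative of `‖y‖²` is `2 (⟪y, x''⟫ + ‖x'‖²)`, and
`|⟪y, x''⟫| ≤ r₀ · C ‖x'‖² ≤ ‖x'‖²`, so `‖x - x₀‖²` is convex. A convex function on `[a, b]`
is bounded by its values at the endpoints, which gives the ball statement.
-/

section InnerProductSpace

variable {E : Type*} [NormedAddCommGroup E] [InnerProductSpace ℝ E]

theorem neg_sq_norm_le_inner_of_norm_le {y z v : E} {r C : ℝ} (hy : ‖y‖ ≤ r)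
    (hz : ‖z‖ ≤ C * ‖v‖ ^ 2) (hCr : C * r ≤ 1) : -‖v‖ ^ 2 ≤ ⟪y, z⟫ := by
  have hr : 0 ≤ r := (norm_nonneg y).trans hy
  calc -‖v‖ ^ 2 ≤ -(r * (C * ‖v‖ ^ 2)) := by nlinarith [sq_nonneg ‖v‖]
    _ ≤ -(‖y‖ * ‖z‖) := neg_le_neg (mul_le_mul hy hz (norm_nonneg z) hr)
    _ ≤ ⟪y, z⟫ := neg_le_of_abs_le (abs_real_inner_le_norm y z)

theorem convexOn_norm_sq_of_inner_deriv2_add_sq_norm_nonneg {D : Set ℝ} (hD : Convex ℝ D)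
    {γ γ' γ'' : ℝ → E} (hγ : ∀ s ∈ D, HasDerivWithinAt γ (γ' s) D s)
    (hγ' : ∀ s ∈ interior D, HasDerivAt γ' (γ'' s) s)
    (hnonneg : ∀ s ∈ interior D, 0 ≤ ⟪γ s, γ'' s⟫ + ‖γ' s‖ ^ 2) :
    ConvexOn ℝ D (fun s => ‖γ s‖ ^ 2) := by
  have hγ_int : ∀ s ∈ interior D, HasDerivAt γ (γ' s) s := fun s hs =>
    (hγ s (interior_subset hs)).hasDerivAt (mem_interior_iff_mem_nhds.mp hs)
  refine convexOn_of_hasDerivWithinAt2_nonneg hD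
    (fun s hs => (hγ s hs).continuousWithinAt.norm.pow 2)
    (fun s hs => (hγ_int s hs).norm_sq.hasDerivWithinAt)
    (fun s hs => (((hγ_int s hs).inner ℝ (hγ' s hs)).const_mul 2).hasDerivWithinAt) ?_
  intro s hs
  rw [real_inner_self_eq_norm_sq]
  linarith [hnonneg s hs]

end InnerProductSpace

theorem geodesic_convexity_analytic_core_general (m : ℕ)
    (x₀ : EuclideanSpace ℝ (Fin m)) (r₀ C : ℝ)
    (hCr : C * r₀ ≤ 1)
    (a b : ℝ) (x x' x'' : ℝ → EuclideanSpace ℝ (Fin m))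
    (hx : ∀ s ∈ Icc a b, HasDerivWithinAt x (x' s) (Icc a b) s)
    (hx' : ∀ s ∈ Icc a b, HasDerivWithinAt x' (x'' s) (Icc a b) s)
    (hball : ∀ s ∈ Icc a b, ‖x s - x₀‖ ≤ r₀)
    (hacc : ∀ s ∈ Icc a b, ‖x'' s‖ ≤ C * ‖x' s‖ ^ 2) :
    ConvexOn ℝ (Icc a b) (fun s => ‖x s - x₀‖ ^ 2) ∧
    ∀ r : ℝ, r ≤ r₀ → ‖x a - x₀‖ < r → ‖x b - x₀‖ < r →
      ∀ s ∈ Icc a b, ‖x s - x₀‖ < r := by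
  have hconv : ConvexOn ℝ (Icc a b) (fun s => ‖x s - x₀‖ ^ 2) := by
    refine convexOn_norm_sq_of_inner_deriv2_add_sq_norm_nonneg (convex_Icc a b)
      (fun s hs => (hx s hs).sub_const x₀)
      (fun s hs => (hx' s (interior_subset hs)).hasDerivAt (mem_interior_iff_mem_nhds.mp hs))
      (fun s hs => ?_)
    have hs' := interior_subset hs
    linarith [neg_sq_norm_le_inner_of_norm_le (hball s hs') (hacc s hs') hCr]
  refine ⟨hconv, fun r _ hra hrb s hs => ?_⟩
  have hab : a ≤ b := hs.1.trans hs.2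
  have hr : 0 ≤ r := (norm_nonneg _).trans hra.le
  have hmax := hconv.le_max_of_mem_Icc (left_mem_Icc.2 hab) (right_mem_Icc.2 hab) hs
  refine (pow_lt_pow_iff_left₀ (norm_nonneg _) hr two_ne_zero).mp (hmax.trans_lt (max_lt ?_ ?_))
  · exact pow_lt_pow_left₀ hra (norm_nonneg _) two_ne_zero
  · exact pow_lt_pow_left₀ hrb (norm_nonneg _) two_ne_zero

/-- geodesic convexity of small balls: analytic core: if
`‖x(s) - x₀‖ ≤ r₀`, `‖x''(s)‖ ≤ C‖x'(s)‖²` with `C·r₀ ≤ 1`, then `s ↦ ‖x(s)-x₀‖²` is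
convex; consequently a segment with endpoints in a smaller concentric open ball stays
in that ball. -/
theorem geodesic_convexity_analytic_core (m : ℕ) (hm : 1 ≤ m)
    (x₀ : EuclideanSpace ℝ (Fin m)) (r₀ C : ℝ)
    (hr₀ : 0 < r₀) (hC : 0 ≤ C) (hCr : C * r₀ ≤ 1)
    (a b : ℝ) (x x' x'' : ℝ → EuclideanSpace ℝ (Fin m))
    (hx : ∀ s ∈ Icc a b, HasDerivWithinAt x (x' s) (Icc a b) s)
    (hx' : ∀ s ∈ Icc a b, HasDerivWithinAt x' (x'' s) (Icc a b) s)
    (hcont : ContinuousOn x'' (Icc a b))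
    (hball : ∀ s ∈ Icc a b, ‖x s - x₀‖ ≤ r₀)
    (hacc : ∀ s ∈ Icc a b, ‖x'' s‖ ≤ C * ‖x' s‖ ^ 2) :
    ConvexOn ℝ (Icc a b) (fun s => ‖x s - x₀‖ ^ 2) ∧
    ∀ r : ℝ, r ≤ r₀ → ‖x a - x₀‖ < r → ‖x b - x₀‖ < r →
      ∀ s ∈ Icc a b, ‖x s - x₀‖ < r :=
  geodesic_convexity_analytic_core_general m x₀ r₀ C hCr a b x x' x'' hx hx' hball hacc
end
end
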